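/- arXiv:1812.00004 — 5 statements merged into one kernel-verified Lean document; each statement's English description precedes it below -/
import Mathlib

section
/- In the hypercube graph Q_n, if X is a (nonempty) subgraph with minimum degree at least g, then X has at least 2^g vertices. -/
/-- The n-dimensional hypercube graph on {0,1}^n: vertices adjacent iff they
differ in exactly one coordinate. -/
def Qgraph (n : ℕ) : SimpleGraph (Fin n → Bool) :=
  SimpleGraph.fromRel (fun x y => (Finset.univ.filter (fun i => x i ≠ y i)).card = 1)

/-!
Induction on `g`. A vertex `v` of `X` has a neighbour `w` in `X`, differing from `v` in some
coordinate `i`. Splitting `X` according to the value of coordinate `i` gives two nonempty halves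
(one containing `v`, the other `w`), and a vertex loses at most one neighbour (its flip in
direction `i`) when passing to its half, so each half has minimum degree at least `g - 1` and
hence at least `2 ^ (g - 1)` vertices.
-/

def flipBit {n : ℕ} (x : Fin n → Bool) (i : Fin n) : Fin n → Bool :=
  Function.update x i (!x i)

def slice {n : ℕ} (X : Set (Fin n → Bool)) (i : Fin n) (b : Bool) : Set (Fin n → Bool) :=
  {x ∈ X | x i = b}

section flipBit

variable {n : ℕ}

lemma flipBit_apply_of_ne {x : Fin n → Bool} {i j : Fin n} (h : j ≠ i) : flipBit x i j = x j :=
  Function.update_of_ne h _ _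

lemma filter_ne_flipBit (x : Fin n → Bool) (i : Fin n) :
    Finset.univ.filter (fun j => x j ≠ flipBit x i j) = {i} := by
  ext j
  by_cases hj : j = i
  · subst hj
    simp only [Finset.mem_filter, Finset.mem_univ, true_and, Finset.mem_singleton, iff_true]
    simp [flipBit]
  · simp [flipBit_apply_of_ne hj, hj]

end flipBit

namespace Qgraph

variable {n : ℕ}

lemma eq_flipBit_of_filter_card_eq_one {x y : Fin n → Bool}
    (h : (Finset.univ.filter (fun i => x i ≠ y i)).card = 1) : ∃ i, y = flipBit x i := by
  obtain ⟨i, hi⟩ := Finset.card_eq_one.mp h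
  have hdiff : ∀ j, x j ≠ y j ↔ j = i := fun j => by
    simpa using Finset.ext_iff.mp hi j
  refine ⟨i, funext fun j => ?_⟩
  by_cases hj : j = i
  · subst hj
    simpa only [flipBit, Function.update_self] using Bool.eq_not.mpr (Ne.symm ((hdiff j).mpr rfl))
  · rw [flipBit_apply_of_ne hj]
    exact (not_not.mp (mt (hdiff j).mp hj)).symm

lemma adj_iff {x y : Fin n → Bool} : (Qgraph n).Adj x y ↔ ∃ i, y = flipBit x i := by
  constructor
  · rintro ⟨-, h | h⟩
    · exact eq_flipBit_of_filter_card_eq_one h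
    · simp_rw [ne_comm (a := y _)] at h
      exact eq_flipBit_of_filter_card_eq_one h
  · rintro ⟨i, rfl⟩
    refine ⟨fun h => ?_, Or.inl ?_⟩
    · simpa [flipBit] using congrFun h i
    · change (Finset.univ.filter _).card = 1
      rw [filter_ne_flipBit, Finset.card_singleton]

lemma eq_flipBit_of_adj_of_apply_ne {u y : Fin n → Bool} {i : Fin n} (hadj : (Qgraph n).Adj u y)
    (hi : y i ≠ u i) : y = flipBit u i := by
  obtain ⟨j, rfl⟩ := adj_iff.mp hadj
  obtain rfl : i = j := by_contra fun hij => hi (flipBit_apply_of_ne hij)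
  rfl

end Qgraph

section slice

variable {n : ℕ} {X : Set (Fin n → Bool)} {i : Fin n}

lemma ncard_inter_neighborSet_le_slice_add_one {u : Fin n → Bool} {b : Bool}
    (hu : u ∈ slice X i b) :
    (X ∩ (Qgraph n).neighborSet u).ncard ≤ (slice X i b ∩ (Qgraph n).neighborSet u).ncard + 1 := by
  have hsub : X ∩ (Qgraph n).neighborSet u ⊆
      insert (flipBit u i) (slice X i b ∩ (Qgraph n).neighborSet u) := by
    rintro y ⟨hyX, hyadj⟩
    by_cases hyi : y i = u i
    · exact Or.inr ⟨⟨hyX, hyi.trans hu.2⟩, hyadj⟩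
    · exact Or.inl (Qgraph.eq_flipBit_of_adj_of_apply_ne hyadj hyi)
  exact (Set.ncard_le_ncard hsub (Set.toFinite _)).trans (Set.ncard_insert_le _ _)

lemma slice_nonempty {u : Fin n → Bool} (hu : u ∈ X) (hflip : flipBit u i ∈ X) (b : Bool) :
    (slice X i b).Nonempty := by
  by_cases hb : u i = b
  · exact ⟨u, hu, hb⟩
  · refine ⟨flipBit u i, hflip, ?_⟩
    simp only [flipBit, Function.update_self]
    cases b <;> simp_all

lemma ncard_slice_false_add_ncard_slice_true (X : Set (Fin n → Bool)) (i : Fin n) :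
    (slice X i false).ncard + (slice X i true).ncard = X.ncard := by
  have hunion : slice X i false ∪ slice X i true = X := by
    ext x
    cases hx : x i <;> simp [slice, hx]
  have hdisj : Disjoint (slice X i false) (slice X i true) :=
    Set.disjoint_left.mpr fun x hx hx' => by simp_all [slice]
  rw [← Set.ncard_union_eq hdisj (Set.toFinite _) (Set.toFinite _), hunion]

end slice

/-- Any nonempty subgraph of Q_n with minimum degree at least g has
at least 2^g vertices. -/
theorem stmt_0 (n g : ℕ) (X : Set (Fin n → Bool)) (hX : X.Nonempty)
    (hdeg : ∀ v ∈ X, g ≤ (X ∩ (Qgraph n).neighborSet v).ncard) :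
    2 ^ g ≤ X.ncard := by
  induction g generalizing X with
  | zero => exact (Set.ncard_pos (Set.toFinite X)).mpr hX
  | succ g ih =>
    obtain ⟨v, hv⟩ := hX
    obtain ⟨w, hwX, hvw⟩ :=
      Set.nonempty_of_ncard_ne_zero ((Nat.succ_pos g).trans_le (hdeg v hv)).ne'
    obtain ⟨i, rfl⟩ := Qgraph.adj_iff.mp hvw
    have hhalf : ∀ b, 2 ^ g ≤ (slice X i b).ncard := fun b =>
      ih _ (slice_nonempty hv hwX b) fun u hu => by
        have := ncard_inter_neighborSet_le_slice_add_one hu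
        have := hdeg u hu.1
        omega
    rw [← ncard_slice_false_add_ncard_slice_true X i, pow_succ]
    have := hhalf false
    have := hhalf true
    omega
end

section
/- For two distinct clusters xQ_n and yQ_n of HCN_n, there are exactly two crossing edges between them if x and y are bitwise complementary, and exactly one crossing edge otherwise. -/
/-- Vertices of the hierarchical cubic network: pairs (cluster label, position). -/
abbrev HVert (n : ℕ) := (Fin n → Bool) × (Fin n → Bool)

/-- The hierarchical cubic network HCN_n. Within a cluster (same first coordinate),
two vertices are adjacent iff their second coordinates differ in exactly one bit.
Crossing edges: (x,y) with x ≠ y is adjacent to (y,x); (x,x) is adjacent to (x̄,x̄). -/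
def HCN (n : ℕ) : SimpleGraph (HVert n) :=
  SimpleGraph.fromRel (fun u v =>
    (u.1 = v.1 ∧ (Finset.univ.filter (fun i => u.2 i ≠ v.2 i)).card = 1) ∨
    (u.1 ≠ u.2 ∧ v = (u.2, u.1)) ∨
    (u.1 = u.2 ∧ v = (fun i => !u.1 i, fun i => !u.2 i)))

/-- `u` and `v` are joined by a crossing edge of HCN_n. -/
def IsCrossing (n : ℕ) (u v : HVert n) : Prop :=
  ((u.1 ≠ u.2 ∧ v = (u.2, u.1)) ∨ (u.1 = u.2 ∧ v = (fun i => !u.1 i, fun i => !u.2 i))) ∨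
  ((v.1 ≠ v.2 ∧ u = (v.2, v.1)) ∨ (v.1 = v.2 ∧ u = (fun i => !v.1 i, fun i => !v.2 i)))

/-!
Every vertex `u` of HCN_n has exactly one crossing neighbour `crossNeighbor u`, and
`crossNeighbor` is an involution, so the crossing edges leaving the cluster `xQ_n` are the pairs
`((x, a), crossNeighbor (x, a))`. The neighbour of `(x, a)` lies in `yQ_n` exactly when `a = y`,
or when `a = x` and `y = x̄`.
-/

namespace HCN

variable {n : ℕ}

def crossNeighbor (u : HVert n) : HVert n :=
  if u.1 = u.2 then (fun i => !u.1 i, fun i => !u.2 i) else (u.2, u.1)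

theorem crossNeighbor_involutive : Function.Involutive (crossNeighbor (n := n)) := by
  rintro ⟨a, b⟩
  by_cases h : a = b
  · subst h
    simp [crossNeighbor]
  · simp [crossNeighbor, h, Ne.symm h]

theorem isCrossing_iff {u v : HVert n} : IsCrossing n u v ↔ v = crossNeighbor u := by
  have h_forward : ((u.1 ≠ u.2 ∧ v = (u.2, u.1)) ∨
      (u.1 = u.2 ∧ v = (fun i => !u.1 i, fun i => !u.2 i))) ↔ v = crossNeighbor u := by
    by_cases h : u.1 = u.2 <;> simp [crossNeighbor, h]
  have h_backward : ((v.1 ≠ v.2 ∧ u = (v.2, v.1)) ∨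
      (v.1 = v.2 ∧ u = (fun i => !v.1 i, fun i => !v.2 i))) ↔ u = crossNeighbor v := by
    by_cases h : v.1 = v.2 <;> simp [crossNeighbor, h]
  rw [IsCrossing, h_forward, h_backward, ← crossNeighbor_involutive.eq_iff (x := u),
    eq_comm (a := crossNeighbor u), or_self]

theorem crossNeighbor_fst_eq_iff {x y a : Fin n → Bool} (hxy : x ≠ y) :
    (crossNeighbor (x, a)).1 = y ↔ a = y ∨ (a = x ∧ x = fun i => !y i) := by
  by_cases hax : x = a
  · subst hax
    have : (fun i => !x i) = y ↔ x = fun i => !y i := by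
      constructor <;> rintro rfl <;> simp
    simp [crossNeighbor, hxy, this]
  · simp [crossNeighbor, hax, Ne.symm hax]

end HCN

open HCN in
theorem stmt_4_general (n : ℕ) (x y : Fin n → Bool) (hxy : x ≠ y) :
    {p : HVert n × HVert n | p.1.1 = x ∧ p.2.1 = y ∧ IsCrossing n p.1 p.2}.ncard
      = if x = (fun i => !y i) then 2 else 1 := by
  have h_image : {p : HVert n × HVert n | p.1.1 = x ∧ p.2.1 = y ∧ IsCrossing n p.1 p.2} =
      (fun a => ((x, a), crossNeighbor (x, a))) ''
        {a | a = y ∨ (a = x ∧ x = fun i => !y i)} := by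
    ext ⟨⟨x', a⟩, v⟩
    simp only [isCrossing_iff, Set.mem_ofPred_eq, Set.mem_image, Prod.mk.injEq]
    constructor
    · rintro ⟨rfl, rfl, rfl⟩
      exact ⟨a, (crossNeighbor_fst_eq_iff hxy).1 rfl, ⟨rfl, rfl⟩, rfl⟩
    · rintro ⟨a, ha, ⟨rfl, rfl⟩, rfl⟩
      exact ⟨rfl, (crossNeighbor_fst_eq_iff hxy).2 ha, rfl⟩
  rw [h_image, Set.ncard_image_of_injective _ fun a b h => congrArg (fun p => p.1.2) h]
  split_ifs with h_compl
  · simp only [and_iff_left h_compl]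
    exact Set.ncard_pair hxy.symm
  · simp only [h_compl, and_false, or_false]
    exact Set.ncard_singleton y

/-- Between two distinct clusters xQ_n and yQ_n of HCN_n there are exactly
two crossing edges if x and y are bitwise complementary, and exactly one
otherwise. (Crossing edges between the clusters are counted as ordered pairs
with first endpoint in xQ_n and second endpoint in yQ_n.) -/
theorem stmt_4 (n : ℕ) (hn : 2 ≤ n) (x y : Fin n → Bool) (hxy : x ≠ y) :
    {p : HVert n × HVert n | p.1.1 = x ∧ p.2.1 = y ∧ IsCrossing n p.1 p.2}.ncard
      = if x = (fun i => !y i) then 2 else 1 :=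
  stmt_4_general n x y hxy
end

section
/- The hierarchical cubic network HCN_n (n ≥ 2) contains no triangle. -/
/-! Edges inside a cluster are hypercube edges, and three bit vectors cannot be pairwise at
Hamming distance 1 because the three distances have even sum; so a triangle is not contained in
one cluster. Each vertex has a single neighbour outside its cluster, the crossing neighbour, while
a triangle meeting two clusters has a vertex both of whose triangle edges leave its cluster. -/

open Finset

lemma hammingDist_bool_cast_zmod_two {ι : Type*} [Fintype ι] (x y : ι → Bool) :
    (hammingDist x y : ZMod 2) = ∑ i, (((x i).toNat + (y i).toNat : ℕ) : ZMod 2) := by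
  rw [hammingDist, card_filter, Nat.cast_sum]
  refine sum_congr rfl fun i _ => ?_
  cases x i <;> cases y i <;> rfl

lemma even_hammingDist_add_bool {ι : Type*} [Fintype ι] (x y z : ι → Bool) :
    Even (hammingDist x y + hammingDist y z + hammingDist x z) := by
  rw [← ZMod.natCast_eq_zero_iff_even]
  push_cast
  simp only [hammingDist_bool_cast_zmod_two, ← sum_add_distrib]
  refine sum_eq_zero fun i _ => ?_
  cases x i <;> cases y i <;> cases z i <;> rfl

namespace HCN

variable {n : ℕ}

noncomputable def crossNbr (u : HVert n) : HVert n :=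
  if u.1 = u.2 then (fun i => !u.1 i, fun i => !u.2 i) else (u.2, u.1)

lemma crossNbr_involutive : Function.Involutive (crossNbr (n := n)) := by
  rintro ⟨x, y⟩
  by_cases h : x = y
  · subst h
    simp [crossNbr]
  · simp [crossNbr, h, Ne.symm h]

lemma crossing_rel_iff (u v : HVert n) :
    ((u.1 ≠ u.2 ∧ v = (u.2, u.1)) ∨ (u.1 = u.2 ∧ v = (fun i => !u.1 i, fun i => !u.2 i))) ↔
      v = crossNbr u := by
  by_cases h : u.1 = u.2 <;> simp [crossNbr, h]

lemma adj_iff {u v : HVert n} :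
    (HCN n).Adj u v ↔ u ≠ v ∧ ((u.1 = v.1 ∧ hammingDist u.2 v.2 = 1) ∨ v = crossNbr u) := by
  rw [HCN, SimpleGraph.fromRel_adj, crossing_rel_iff, crossing_rel_iff, eq_comm (a := u),
    crossNbr_involutive.eq_iff, ← hammingDist, ← hammingDist, hammingDist_comm v.2, eq_comm (a := v.1)]
  simp only [or_self]

lemma crossNbr_eq_self_of_fst_eq {u : HVert n} (h : (crossNbr u).1 = u.1) : crossNbr u = u := by
  obtain ⟨x, y⟩ := u
  by_cases hxy : x = y
  · subst hxy
    simp only [crossNbr, if_true] at h ⊢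
    rw [h]
  · rw [crossNbr, if_neg hxy] at h
    exact absurd h.symm hxy

lemma eq_crossNbr_of_adj_of_fst_ne {u v : HVert n} (huv : (HCN n).Adj u v) (h : u.1 ≠ v.1) :
    v = crossNbr u :=
  ((adj_iff.1 huv).2.resolve_left fun hcube => h hcube.1)

lemma hammingDist_eq_one_of_adj_of_fst_eq {u v : HVert n} (huv : (HCN n).Adj u v)
    (h : u.1 = v.1) : hammingDist u.2 v.2 = 1 := by
  obtain ⟨hne, hcube | rfl⟩ := adj_iff.1 huv
  · exact hcube.2
  · exact absurd (crossNbr_eq_self_of_fst_eq h.symm).symm hne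

lemma eq_of_adj_of_fst_ne {w u v : HVert n} (hu : (HCN n).Adj w u) (hv : (HCN n).Adj w v)
    (hwu : w.1 ≠ u.1) (hwv : w.1 ≠ v.1) : u = v :=
  (eq_crossNbr_of_adj_of_fst_ne hu hwu).trans (eq_crossNbr_of_adj_of_fst_ne hv hwv).symm

end HCN

theorem stmt_6_general (n : ℕ) : (HCN n).CliqueFree 3 := by
  rintro s hs
  obtain ⟨a, b, c, hab, hac, hbc, rfl⟩ := SimpleGraph.is3Clique_iff.1 hs
  by_cases h₁ : a.1 = b.1 <;> by_cases h₂ : b.1 = c.1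
  · have := even_hammingDist_add_bool a.2 b.2 c.2
    rw [HCN.hammingDist_eq_one_of_adj_of_fst_eq hab h₁,
      HCN.hammingDist_eq_one_of_adj_of_fst_eq hbc h₂,
      HCN.hammingDist_eq_one_of_adj_of_fst_eq hac (h₁.trans h₂)] at this
    exact absurd this (by decide)
  · exact hab.ne (HCN.eq_of_adj_of_fst_ne hac.symm hbc.symm (h₁ ▸ Ne.symm h₂) (Ne.symm h₂))
  · exact hbc.ne (HCN.eq_of_adj_of_fst_ne hab hac h₁ (h₂ ▸ h₁))
  · exact hac.ne (HCN.eq_of_adj_of_fst_ne hab.symm hbc (Ne.symm h₁) h₂)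

/-- HCN_n (n ≥ 2) contains no triangle. -/
theorem stmt_6 (n : ℕ) (hn : 2 ≤ n) : (HCN n).CliqueFree 3 :=
  stmt_6_general n
end

section
/- In the hierarchical cubic network HCN_n with n ≥ 2, if X is a (nonempty) subgraph with minimum degree at least g, where 1 ≤ g ≤ n−1, then X has at least 2^g vertices. -/
/-!
Inside a cluster `{x} × Q_n` the network is the hypercube `Q_n`, and every vertex has at most one
neighbour outside its cluster (its crossing neighbour). If `X` lies in a single cluster it is a
subgraph of `Q_n` of minimum degree `≥ g`; otherwise `X` meets two clusters and has minimum degree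
`≥ g - 1` in each, so both contribute `2 ^ (g - 1)` vertices.

The hypercube bound is proved by induction on `g`: split `S` along a coordinate in which two
adjacent vertices of `S` differ; both halves are nonempty, and a vertex loses only its flip in that
coordinate, so each half has minimum degree `≥ g - 1`.
-/

open Set

section Hypercube

variable {ι : Type*} [Fintype ι]

lemma apply_eq_of_hammingDist_eq_one {β : ι → Type*} [∀ i, DecidableEq (β i)] {x y : ∀ i, β i}
    {i j : ι} (h : hammingDist x y = 1) (hi : x i ≠ y i) (hj : j ≠ i) : x j = y j := by
  by_contra hxy
  exact hj (Finset.card_le_one.mp h.le j (by simpa using hxy) i (by simpa using hi))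

lemma subsingleton_setOf_hammingDist_eq_one_apply_ne (x : ι → Bool) (i : ι) :
    {y | hammingDist x y = 1 ∧ y i ≠ x i}.Subsingleton := by
  rintro y ⟨hy, hyi⟩ z ⟨hz, hzi⟩
  funext j
  by_cases hj : j = i
  · subst hj
    revert hyi hzi
    cases y j <;> cases z j <;> cases x j <;> decide
  · rw [← apply_eq_of_hammingDist_eq_one hy hyi.symm hj,
      apply_eq_of_hammingDist_eq_one hz hzi.symm hj]

lemma ncard_inter_hammingDist_eq_one_le (S : Set (ι → Bool)) (x : ι → Bool) (i : ι) :
    (S ∩ {y | hammingDist x y = 1}).ncard ≤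
      (S ∩ {w | w i = x i} ∩ {y | hammingDist x y = 1}).ncard + 1 := by
  have hout : ((S ∩ {y | hammingDist x y = 1}) \ {w | w i = x i}).ncard ≤ 1 :=
    ncard_le_one_iff_subsingleton.mpr <|
      (subsingleton_setOf_hammingDist_eq_one_apply_ne x i).anti fun y ⟨⟨_, hy⟩, hyi⟩ => ⟨hy, hyi⟩
  rw [← ncard_inter_add_ncard_sdiff_eq_ncard _ {w | w i = x i}, inter_right_comm]
  omega

theorem two_pow_le_ncard_of_le_ncard_hammingDist_eq_one {g : ℕ} {S : Set (ι → Bool)}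
    (hS : S.Nonempty) (hdeg : ∀ x ∈ S, g ≤ (S ∩ {y | hammingDist x y = 1}).ncard) :
    2 ^ g ≤ S.ncard := by
  induction g generalizing S with
  | zero => exact hS.ncard_pos
  | succ g ih =>
    obtain ⟨x, hx⟩ := hS
    have hnbr : (S ∩ {y | hammingDist x y = 1}).Nonempty :=
      nonempty_of_ncard_ne_zero (by have := hdeg x hx; omega)
    obtain ⟨y, hy, hxy : hammingDist x y = 1⟩ := hnbr
    obtain ⟨i, hi⟩ := Function.ne_iff.mp (hammingDist_ne_zero.mp (hxy ▸ one_ne_zero))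
    have half (z : ι → Bool) (hz : z ∈ S) : 2 ^ g ≤ (S ∩ {w | w i = z i}).ncard :=
      ih ⟨z, hz, rfl⟩ fun w ⟨hw, hwz⟩ => by
        have := (hdeg w hw).trans (ncard_inter_hammingDist_eq_one_le S w i)
        rw [hwz] at this
        omega
    have hdisj : Disjoint (S ∩ {w | w i = x i}) (S ∩ {w | w i = y i}) :=
      disjoint_left.mpr fun w hwx hwy => hi (hwx.2.symm.trans hwy.2)
    calc 2 ^ (g + 1) = 2 ^ g + 2 ^ g := by ring
      _ ≤ (S ∩ {w | w i = x i}).ncard + (S ∩ {w | w i = y i}).ncard :=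
        add_le_add (half x hx) (half y hy)
      _ = (S ∩ {w | w i = x i} ∪ S ∩ {w | w i = y i}).ncard := (ncard_union_eq hdisj).symm
      _ ≤ S.ncard := ncard_le_ncard (union_subset inter_subset_left inter_subset_left)

end Hypercube

lemma Set.ncard_preimage_mk_le {α β : Type*} {s : Set (α × β)} (hs : s.Finite) (a : α) :
    (Prod.mk a ⁻¹' s).ncard ≤ s.ncard := by
  rw [← ncard_image_of_injective _ (Prod.mk_right_injective a)]
  exact ncard_le_ncard (image_preimage_subset _ _) hs

lemma Set.ncard_preimage_mk_add_ncard_preimage_mk_le {α β : Type*} {s : Set (α × β)}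
    (hs : s.Finite) {a a' : α} (h : a ≠ a') :
    (Prod.mk a ⁻¹' s).ncard + (Prod.mk a' ⁻¹' s).ncard ≤ s.ncard := by
  have hdisj : Disjoint (Prod.mk a '' (Prod.mk a ⁻¹' s)) (Prod.mk a' '' (Prod.mk a' ⁻¹' s)) := by
    simp only [disjoint_left, mem_image, not_exists, not_and]
    rintro _ ⟨b, -, rfl⟩ b' - hb'
    exact h (congrArg Prod.fst hb').symm
  have hfin (a : α) : (Prod.mk a '' (Prod.mk a ⁻¹' s)).Finite := hs.subset (image_preimage_subset _ _)
  calc (Prod.mk a ⁻¹' s).ncard + (Prod.mk a' ⁻¹' s).ncard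
      = (Prod.mk a '' (Prod.mk a ⁻¹' s)).ncard + (Prod.mk a' '' (Prod.mk a' ⁻¹' s)).ncard := by
        rw [ncard_image_of_injective _ (Prod.mk_right_injective a),
          ncard_image_of_injective _ (Prod.mk_right_injective a')]
    _ = (Prod.mk a '' (Prod.mk a ⁻¹' s) ∪ Prod.mk a' '' (Prod.mk a' ⁻¹' s)).ncard :=
        (ncard_union_eq hdisj (hfin a) (hfin a')).symm
    _ ≤ s.ncard :=
        ncard_le_ncard (union_subset (image_preimage_subset _ _) (image_preimage_subset _ _)) hs

namespace HCN

variable {n : ℕ}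

/-- The neighbour of `u` along its crossing edge. -/
def cross (u : HVert n) : HVert n :=
  if u.1 = u.2 then (fun i => !u.1 i, fun i => !u.2 i) else (u.2, u.1)

lemma eq_cross_of_adj {u v : HVert n} (h : (HCN n).Adj u v) (hv : v.1 ≠ u.1) : v = cross u := by
  obtain ⟨-, (⟨huv, -⟩ | ⟨huu, rfl⟩ | ⟨huu, rfl⟩) | (⟨hvu, -⟩ | ⟨hvv, rfl⟩ | ⟨hvv, rfl⟩)⟩ := h
  · exact absurd huv.symm hv
  · simp [cross, huu]
  · simp [cross, huu]
  · exact absurd hvu hv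
  · simp [cross, Ne.symm hvv]
  · simp only [cross, hvv, if_true, Bool.not_not]
    exact Prod.ext hvv rfl

lemma adj_mk_mk_iff {x y y' : Fin n → Bool} :
    (HCN n).Adj (x, y) (x, y') ↔ hammingDist y y' = 1 := by
  refine ⟨fun ⟨hne, h⟩ => ?_, fun h => ⟨by simp [← hammingDist_ne_zero, h], .inl (.inl ⟨rfl, h⟩)⟩⟩
  -- `x = !x` forces `n = 0`, where the two endpoints would coincide.
  have hx : x ≠ fun i => !x i := fun hx =>
    hne (Prod.ext rfl (funext fun i => (by simpa using congrFun hx i : False).elim))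
  rcases h with (⟨-, h⟩ | ⟨hxy, h⟩ | ⟨-, h⟩) | (⟨-, h⟩ | ⟨hxy, h⟩ | ⟨-, h⟩)
  · exact h
  · exact absurd (Prod.ext_iff.mp h).1 hxy
  · exact absurd (Prod.ext_iff.mp h).1 hx
  · rwa [hammingDist_comm]
  · exact absurd (Prod.ext_iff.mp h).1 hxy
  · exact absurd (Prod.ext_iff.mp h).1 hx

lemma ncard_inter_neighborSet_inter_fst_eq (X : Set (HVert n)) (x y : Fin n → Bool) :
    (X ∩ (HCN n).neighborSet (x, y) ∩ {v | v.1 = x}).ncard =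
      (Prod.mk x ⁻¹' X ∩ {y' | hammingDist y y' = 1}).ncard := by
  have : X ∩ (HCN n).neighborSet (x, y) ∩ {v | v.1 = x} =
      Prod.mk x '' (Prod.mk x ⁻¹' X ∩ {y' | hammingDist y y' = 1}) := by
    ext ⟨a, b⟩
    constructor
    · rintro ⟨⟨hX, hadj⟩, rfl : a = x⟩
      exact ⟨b, ⟨hX, adj_mk_mk_iff.mp hadj⟩, rfl⟩
    · rintro ⟨b, ⟨hX, hb⟩, ⟨⟩⟩
      exact ⟨⟨hX, adj_mk_mk_iff.mpr hb⟩, rfl⟩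
  rw [this, ncard_image_of_injective _ (Prod.mk_right_injective x)]

lemma subsingleton_neighborSet_diff (u : HVert n) :
    ((HCN n).neighborSet u \ {v | v.1 = u.1}).Subsingleton :=
  subsingleton_singleton.anti fun _ ⟨hadj, hv⟩ => eq_cross_of_adj hadj hv

lemma ncard_inter_neighborSet_le (X : Set (HVert n)) (x y : Fin n → Bool) :
    (X ∩ (HCN n).neighborSet (x, y)).ncard ≤
      (Prod.mk x ⁻¹' X ∩ {y' | hammingDist y y' = 1}).ncard + 1 := by
  have hout : ((X ∩ (HCN n).neighborSet (x, y)) \ {v | v.1 = x}).ncard ≤ 1 :=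
    ncard_le_one_iff_subsingleton.mpr <|
      (subsingleton_neighborSet_diff (x, y)).anti (sdiff_subset_sdiff_left inter_subset_right)
  rw [← ncard_inter_add_ncard_sdiff_eq_ncard _ {v | v.1 = x},
    ncard_inter_neighborSet_inter_fst_eq]
  omega

lemma ncard_inter_neighborSet_eq_of_subset {X : Set (HVert n)} {x : Fin n → Bool}
    (hX : X ⊆ {v | v.1 = x}) (y : Fin n → Bool) :
    (X ∩ (HCN n).neighborSet (x, y)).ncard =
      (Prod.mk x ⁻¹' X ∩ {y' | hammingDist y y' = 1}).ncard := by
  rw [← ncard_inter_neighborSet_inter_fst_eq, inter_eq_left.mpr (inter_subset_left.trans hX)]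

end HCN

theorem stmt_7_general (n g : ℕ) (X : Set (HVert n)) (hX : X.Nonempty)
    (hdeg : ∀ v ∈ X, g ≤ (X ∩ (HCN n).neighborSet v).ncard) :
    2 ^ g ≤ X.ncard := by
  obtain ⟨⟨x, y⟩, hxy⟩ := hX
  by_cases hone : X ⊆ {v | v.1 = x}
  · calc 2 ^ g ≤ (Prod.mk x ⁻¹' X).ncard :=
          two_pow_le_ncard_of_le_ncard_hammingDist_eq_one ⟨y, hxy⟩ fun y' hy' =>
            (hdeg _ hy').trans (HCN.ncard_inter_neighborSet_eq_of_subset hone y').le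
      _ ≤ X.ncard := ncard_preimage_mk_le X.toFinite x
  · obtain ⟨⟨x', y'⟩, hx'y', hx'⟩ := not_subset.mp hone
    have hfibre (a b : Fin n → Bool) (hab : (a, b) ∈ X) : 2 ^ (g - 1) ≤ (Prod.mk a ⁻¹' X).ncard :=
      two_pow_le_ncard_of_le_ncard_hammingDist_eq_one ⟨b, hab⟩ fun b' hb' => by
        have := (hdeg _ hb').trans (HCN.ncard_inter_neighborSet_le X a b')
        omega
    calc 2 ^ g ≤ 2 ^ (g - 1) + 2 ^ (g - 1) := by cases g <;> simp [pow_succ]; omega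
      _ ≤ (Prod.mk x ⁻¹' X).ncard + (Prod.mk x' ⁻¹' X).ncard :=
          add_le_add (hfibre x y hxy) (hfibre x' y' hx'y')
      _ ≤ X.ncard := ncard_preimage_mk_add_ncard_preimage_mk_le X.toFinite (Ne.symm hx')

/-- Any nonempty subgraph of HCN_n (n ≥ 2) with minimum degree at least g,
1 ≤ g ≤ n-1, has at least 2^g vertices. -/
theorem stmt_7 (n g : ℕ) (hn : 2 ≤ n) (hg1 : 1 ≤ g) (hg2 : g ≤ n - 1)
    (X : Set (HVert n)) (hX : X.Nonempty)
    (hdeg : ∀ v ∈ X, g ≤ (X ∩ (HCN n).neighborSet v).ncard) :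
    2 ^ g ≤ X.ncard :=
  stmt_7_general n g X hX hdeg
end

section
/- For n ≥ 2 and 1 ≤ g ≤ n−1, if F₁ and F₂ are two g-good-neighbor faulty sets of HCN_n each of size at most 2^g(n+2−g) − 1, then F₁ ∪ F₂ ≠ V(HCN_n). -/
/-- `F` is a g-good-neighbor faulty set of HCN_n: every vertex outside `F`
has at least `g` neighbors outside `F`. -/
def GoodNbrSet (n g : ℕ) (F : Set (HVert n)) : Prop :=
  ∀ v ∉ F, g ≤ (((HCN n).neighborSet v) \ F).ncard

theorem HVert.card (n : ℕ) : Nat.card (HVert n) = 2 ^ n * 2 ^ n := by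
  simp [HVert]

theorem two_mul_two_pow_mul_le (n g : ℕ) (hg1 : 1 ≤ g) (hg2 : g ≤ n - 1) :
    2 * (2 ^ g * (n + 2 - g)) ≤ 2 ^ n * 2 ^ n := by
  have hpow : 2 * 2 ^ g ≤ 2 ^ n := by
    rw [← pow_succ']
    exact Nat.pow_le_pow_right (by norm_num) (by omega)
  have hlin : n + 2 - g ≤ 2 ^ n := by
    have := n.lt_two_pow_self
    omega
  calc 2 * (2 ^ g * (n + 2 - g)) = 2 * 2 ^ g * (n + 2 - g) := (mul_assoc ..).symm
    _ ≤ 2 ^ n * 2 ^ n := Nat.mul_le_mul hpow hlin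

theorem stmt_13_general (n g : ℕ) (hg1 : 1 ≤ g) (hg2 : g ≤ n - 1)
    (F1 F2 : Set (HVert n))
    (hc1 : F1.ncard ≤ 2 ^ g * (n + 2 - g) - 1)
    (hc2 : F2.ncard ≤ 2 ^ g * (n + 2 - g) - 1) :
    F1 ∪ F2 ≠ Set.univ := by
  apply Set.union_ne_univ_of_ncard_add_ncard_lt
  have hbound := two_mul_two_pow_mul_le n g hg1 hg2
  have hpos : 0 < 2 ^ n * 2 ^ n := by positivity
  rw [HVert.card]
  omega

/-- For n ≥ 2 and 1 ≤ g ≤ n-1, two g-good-neighbor faulty sets of HCN_n of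
size at most 2^g(n+2-g) - 1 cannot cover all the vertices. -/
theorem stmt_13 (n g : ℕ) (hn : 2 ≤ n) (hg1 : 1 ≤ g) (hg2 : g ≤ n - 1)
    (F1 F2 : Set (HVert n)) (h1 : GoodNbrSet n g F1) (h2 : GoodNbrSet n g F2)
    (hc1 : F1.ncard ≤ 2 ^ g * (n + 2 - g) - 1)
    (hc2 : F2.ncard ≤ 2 ^ g * (n + 2 - g) - 1) :
    F1 ∪ F2 ≠ Set.univ :=
  stmt_13_general n g hg1 hg2 F1 F2 hc1 hc2
end
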